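/- Fix n ≥ 1, ε > 0, real parameters β_1 and γ_1, and H : {0,1}^n → ℝ, and define QAOA amplitudes of depth 1 by α_{0,z} = 2^{−n/2} and α_{1,j} = Σ_{z∈{0,1}^n} (Π_{h=1}^{n} a_{β_1}(j_h, z_h)) · α_{0,z} · e^{−i γ_1 H(z)}, where a_β(0,0) = a_β(1,1) = cos β and a_β(0,1) = a_β(1,0) = −i·sin β. If δ = max_{ℓ∈ℝ} |{z : H(z) = ℓ}| / 2^n satisfies δ ≥ 1 − 2^{−n(1/2+ε)}, then for every j ∈ {0,1}^n, |α_{1,j}| ≤ 2^{1−εn} + 2^{−n/2}; in particular all depth-1 QAOA amplitudes are exponentially small in n. -/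

import Mathlib

open scoped Classical

/-- The entries of `exp(−iβσ_X)`: `a(0,0) = a(1,1) = cos β`, `a(0,1) = a(1,0) = −i·sin β`. -/
noncomputable def aEnt (β : ℝ) : Fin 2 → Fin 2 → ℂ :=
  fun i k => if i = k then ((Real.cos β : ℝ) : ℂ) else -Complex.I * ((Real.sin β : ℝ) : ℂ)

/-- QAOA amplitudes on `n` qubits for the diagonal Hamiltonian `Ham`:
`α_{0,z} = 2^{−n/2}` and
`α_{t+1,j} = Σ_z (Π_h a_{β_{t+1}}(j_h, z_h)) α_{t,z} e^{−iγ_{t+1} Ham(z)}`. -/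
noncomputable def qaoaAmp (n : ℕ) (β γ : ℕ → ℝ) (Ham : (Fin n → Fin 2) → ℝ) :
    ℕ → (Fin n → Fin 2) → ℂ
  | 0, _ => ((1 / Real.sqrt (2 ^ n) : ℝ) : ℂ)
  | t + 1, j =>
      ∑ z : Fin n → Fin 2,
        (∏ h : Fin n, aEnt (β (t + 1)) (j h) (z h)) * qaoaAmp n β γ Ham t z *
          Complex.exp (-(Complex.I * (γ (t + 1) : ℂ) * (Ham z : ℂ)))

/-- `δ = max_ℓ |{z : Ham(z) = ℓ}| / 2^n`, the maximum fraction of bit strings sharing the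
same objective value. -/
noncomputable def deltaFrac (n : ℕ) (Ham : (Fin n → Fin 2) → ℝ) : ℝ :=
  (⨆ ℓ : ℝ, ((Finset.univ.filter (fun z : Fin n → Fin 2 => Ham z = ℓ)).card : ℝ)) / 2 ^ n

/-!
Up to the factor `2^{-n/2}`, `α_{1,j}` is `∑_z P(z) e^{-iγ H(z)}` with `|P(z)| ≤ 1` and
`|∑_z P(z)| = 1`. Replacing every phase by the phase `e^{-iγℓ}` of the most frequent value `ℓ`
of `H` changes the sum by at most `2` per string with `H(z) ≠ ℓ`, and by the hypothesis on `δ`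
there are at most `2^{n/2 - εn}` such strings.
-/

open Finset

lemma norm_aEnt_le_one (β : ℝ) (i k : Fin 2) : ‖aEnt β i k‖ ≤ 1 := by
  unfold aEnt
  split
  · rw [Complex.norm_real, Real.norm_eq_abs]
    exact Real.abs_cos_le_one β
  · rw [norm_mul, norm_neg, Complex.norm_I, one_mul, Complex.norm_real, Real.norm_eq_abs]
    exact Real.abs_sin_le_one β

lemma sum_aEnt (β : ℝ) (i : Fin 2) : ∑ k, aEnt β i k = Complex.exp (↑(-β) * Complex.I) := by
  rw [Complex.exp_mul_I, Complex.ofReal_neg, Complex.cos_neg, Complex.sin_neg,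
    ← Complex.ofReal_cos, ← Complex.ofReal_sin]
  fin_cases i <;> simp [Fin.sum_univ_two, aEnt] <;> ring

lemma norm_prod_aEnt_le_one {ι : Type*} [Fintype ι] (β : ℝ) (j z : ι → Fin 2) :
    ‖∏ h, aEnt β (j h) (z h)‖ ≤ 1 := by
  rw [norm_prod]
  exact prod_le_one (fun _ _ ↦ norm_nonneg _) fun h _ ↦ norm_aEnt_le_one β (j h) (z h)

/-- The sum factorises over qubits into one factor `cos β - i sin β = e^{-iβ}` per qubit. -/
lemma norm_sum_prod_aEnt {ι : Type*} [Fintype ι] [DecidableEq ι] (β : ℝ) (j : ι → Fin 2) :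
    ‖∑ z : ι → Fin 2, ∏ h, aEnt β (j h) (z h)‖ = 1 := by
  rw [← Fintype.prod_sum, norm_prod]
  simp_rw [sum_aEnt, Complex.norm_exp_ofReal_mul_I, prod_const_one]

lemma norm_exp_neg_I_mul (γ x : ℝ) : ‖Complex.exp (-(Complex.I * γ * x))‖ = 1 := by
  rw [show -(Complex.I * γ * x) = ↑(-(γ * x)) * Complex.I by push_cast; ring]
  exact Complex.norm_exp_ofReal_mul_I _

lemma norm_sum_mul_le_of_eq_off {α R : Type*} [Fintype α] [NormedRing R] {P E : α → R} {e : R}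
    (T : Finset α) (he : ‖e‖ ≤ 1) (hP : ∀ z, ‖P z‖ ≤ 1) (hE : ∀ z, ‖E z‖ ≤ 1)
    (hT : ∀ z ∉ T, E z = e) :
    ‖∑ z, P z * E z‖ ≤ ‖∑ z, P z‖ + 2 * #T := by
  have hsplit : ∑ z, P z * E z = (∑ z, P z) * e + ∑ z ∈ T, P z * (E z - e) := by
    rw [sum_mul, sum_subset (subset_univ T) fun z _ hz ↦ by rw [hT z hz, sub_self, mul_zero],
      ← sum_add_distrib]
    simp_rw [mul_sub, add_sub_cancel]
  have hterm : ∀ z ∈ T, ‖P z * (E z - e)‖ ≤ 2 := fun z _ ↦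
    calc ‖P z * (E z - e)‖ ≤ ‖P z‖ * (‖E z‖ + ‖e‖) :=
          (norm_mul_le _ _).trans (by gcongr; exact norm_sub_le _ _)
      _ ≤ 1 * (1 + 1) := by gcongr; exacts [hP z, hE z]
      _ = 2 := by norm_num
  calc ‖∑ z, P z * E z‖ ≤ ‖∑ z, P z‖ * ‖e‖ + ∑ _z ∈ T, (2 : ℝ) := by
        rw [hsplit]
        exact (norm_add_le _ _).trans (add_le_add (norm_mul_le _ _) (norm_sum_le_of_le T hterm))
    _ ≤ ‖∑ z, P z‖ + 2 * #T := by
        rw [sum_const, nsmul_eq_mul, mul_comm (#T : ℝ)]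
        gcongr
        exact mul_le_of_le_one_right (norm_nonneg _) he

lemma exists_card_filter_eq_eq_iSup {α β : Type*} [Fintype α] [Nonempty β] [DecidableEq β]
    (f : α → β) : ∃ ℓ, (#{z | f z = ℓ} : ℝ) = ⨆ ℓ, (#{z | f z = ℓ} : ℝ) :=
  (Set.range_nonempty _).csSup_mem <|
    (Set.finite_range fun s : Finset α ↦ (#s : ℝ)).subset <| by rintro _ ⟨ℓ, rfl⟩; exact ⟨_, rfl⟩

lemma exists_card_filter_ne_le_of_le_deltaFrac {n : ℕ} {Ham : (Fin n → Fin 2) → ℝ} {η : ℝ}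
    (hδ : 1 - η ≤ deltaFrac n Ham) : ∃ ℓ, (#{z | Ham z ≠ ℓ} : ℝ) ≤ η * 2 ^ n := by
  obtain ⟨ℓ, hℓ⟩ := exists_card_filter_eq_eq_iSup Ham
  refine ⟨ℓ, ?_⟩
  have hcard := card_filter_add_card_filter_not (s := univ) fun z ↦ Ham z = ℓ
  rw [card_univ, Fintype.card_pi, prod_const, card_univ, Fintype.card_fin, Fintype.card_fin]
    at hcard
  rw [deltaFrac, ← hℓ, le_div_iff₀ (by positivity)] at hδ
  have hcard' : (#{z | Ham z = ℓ} : ℝ) + #{z | Ham z ≠ ℓ} = 2 ^ n := by exact_mod_cast hcard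
  linarith

lemma qaoaAmp_one (n : ℕ) (β γ : ℕ → ℝ) (Ham : (Fin n → Fin 2) → ℝ) (j : Fin n → Fin 2) :
    qaoaAmp n β γ Ham 1 j = ((1 / Real.sqrt (2 ^ n) : ℝ) : ℂ) *
      ∑ z, (∏ h, aEnt (β 1) (j h) (z h)) * Complex.exp (-(Complex.I * γ 1 * Ham z)) := by
  rw [qaoaAmp, mul_sum]
  refine sum_congr rfl fun z _ ↦ ?_
  rw [qaoaAmp]
  ring

lemma one_div_sqrt_two_pow (n : ℕ) : 1 / Real.sqrt (2 ^ n) = (2 : ℝ) ^ (-(n : ℝ) / 2) := by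
  rw [Real.sqrt_eq_rpow, ← Real.rpow_natCast, ← Real.rpow_mul zero_le_two, one_div,
    ← Real.rpow_neg zero_le_two]
  ring_nf

theorem qaoaAmp_depth_one_flat_general (n : ℕ) (ε : ℝ)
    (β₁ γ₁ : ℝ) (Ham : (Fin n → Fin 2) → ℝ)
    (hδ : 1 - (2 : ℝ) ^ (-(n : ℝ) * (1 / 2 + ε)) ≤ deltaFrac n Ham)
    (j : Fin n → Fin 2) :
    ‖qaoaAmp n (fun _ => β₁) (fun _ => γ₁) Ham 1 j‖ ≤
      (2 : ℝ) ^ (1 - ε * n) + (2 : ℝ) ^ (-(n : ℝ) / 2) := by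
  obtain ⟨ℓ, hℓ⟩ := exists_card_filter_ne_le_of_le_deltaFrac hδ
  have hsum := norm_sum_mul_le_of_eq_off {z | Ham z ≠ ℓ}
    (norm_exp_neg_I_mul γ₁ ℓ).le (norm_prod_aEnt_le_one β₁ j)
    (fun z ↦ (norm_exp_neg_I_mul γ₁ (Ham z)).le) (fun z hz ↦ by simp_all)
  rw [norm_sum_prod_aEnt] at hsum
  rw [qaoaAmp_one, norm_mul, Complex.norm_real, Real.norm_of_nonneg (by positivity),
    one_div_sqrt_two_pow]
  calc (2 : ℝ) ^ (-(n : ℝ) / 2) * ‖_‖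
      ≤ 2 ^ (-(n : ℝ) / 2) * (1 + 2 * (2 ^ (-(n : ℝ) * (1 / 2 + ε)) * 2 ^ (n : ℝ))) := by
        rw [Real.rpow_natCast]
        gcongr
        linarith
    _ = 2 ^ (1 - ε * n) + 2 ^ (-(n : ℝ) / 2) := by
        have hexp : (2 : ℝ) ^ (1 - ε * n) =
            2 * 2 ^ (-(n : ℝ) / 2) * 2 ^ (-(n : ℝ) * (1 / 2 + ε)) * 2 ^ (n : ℝ) := by
          rw [show 1 - ε * n = 1 + -(n : ℝ) / 2 + -(n : ℝ) * (1 / 2 + ε) + n by ring,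
            Real.rpow_add two_pos, Real.rpow_add two_pos, Real.rpow_add two_pos, Real.rpow_one]
        rw [hexp]
        ring

/-- If `δ = max_ℓ |{z : Ham(z) = ℓ}| / 2^n ≥ 1 − 2^{−n(1/2+ε)}`, then every depth-1 QAOA
amplitude satisfies `|α_{1,j}| ≤ 2^{1−εn} + 2^{−n/2}`; in particular all depth-1 QAOA
amplitudes are exponentially small in `n`. -/
theorem qaoaAmp_depth_one_flat (n : ℕ) (hn : 1 ≤ n) (ε : ℝ) (hε : 0 < ε)
    (β₁ γ₁ : ℝ) (Ham : (Fin n → Fin 2) → ℝ)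
    (hδ : 1 - (2 : ℝ) ^ (-(n : ℝ) * (1 / 2 + ε)) ≤ deltaFrac n Ham)
    (j : Fin n → Fin 2) :
    ‖qaoaAmp n (fun _ => β₁) (fun _ => γ₁) Ham 1 j‖ ≤
      (2 : ℝ) ^ (1 - ε * n) + (2 : ℝ) ^ (-(n : ℝ) / 2) :=
  qaoaAmp_depth_one_flat_general n ε β₁ γ₁ Ham hδ j
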